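/- Let M(λ) = M_0 + M_1λ + ⋯ + M_dλ^d ∈ F[λ]^{m×(m+n)} be a polynomial matrix of degree at most d, let α_k be the number of right minimal indices of M(λ) equal to k, and let k' = ⌈md/n⌉ and t = nk' − md. Then M(λ) has full-Sylvester-rank if and only if M(λ) has full row normal rank m and its right minimal indices satisfy α_{k'−1} = t, α_{k'} = n − t, and α_j = 0 for all j ∉ {k'−1, k'}. -/

import Mathlib

open Polynomial Matrix

noncomputable section

variable {F : Type*} [Field F]

/-- The rows of a polynomial matrix, viewed as vectors of rational functions. -/
def ratRow {p q : ℕ} (M : Matrix (Fin p) (Fin q) F[X]) (i : Fin p) :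
    Fin q → RatFunc F :=
  fun j => algebraMap F[X] (RatFunc F) (M i j)

/-- The rational vector subspace spanned by the rows of a polynomial matrix. -/
def rowSpan {p q : ℕ} (M : Matrix (Fin p) (Fin q) F[X]) :
    Submodule (RatFunc F) (Fin q → RatFunc F) :=
  Submodule.span (RatFunc F) (Set.range (ratRow M))

/-- The degree of the `i`-th row of a polynomial matrix. -/
def rowDeg {p q : ℕ} (M : Matrix (Fin p) (Fin q) F[X]) (i : Fin p) : ℕ :=
  Finset.univ.sup fun j => (M i j).natDegree

/-- The rows of `M` form a polynomial basis of the rational subspace `V` whose sum of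
row degrees is minimal among all polynomial bases of `V`. -/
def IsMinimalBasisOf {p q : ℕ} (V : Submodule (RatFunc F) (Fin q → RatFunc F))
    (M : Matrix (Fin p) (Fin q) F[X]) : Prop :=
  LinearIndependent (RatFunc F) (ratRow M) ∧ rowSpan M = V ∧
    ∀ M' : Matrix (Fin p) (Fin q) F[X],
      LinearIndependent (RatFunc F) (ratRow M') → rowSpan M' = V →
        ∑ i, rowDeg M i ≤ ∑ i, rowDeg M' i

/-- A polynomial matrix is a minimal basis if its rows form a minimal basis of the
rational subspace they span. -/
def IsMinimalBasis {p q : ℕ} (M : Matrix (Fin p) (Fin q) F[X]) : Prop :=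
  IsMinimalBasisOf (rowSpan M) M

/-- A polynomial matrix viewed as a matrix of rational functions. -/
def ratMat {p q : ℕ} (M : Matrix (Fin p) (Fin q) F[X]) :
    Matrix (Fin p) (Fin q) (RatFunc F) :=
  M.map (algebraMap F[X] (RatFunc F))

/-- The right null-space over `F(λ)` of a polynomial matrix. -/
def rightNullSpace {p q : ℕ} (M : Matrix (Fin p) (Fin q) F[X]) :
    Submodule (RatFunc F) (Fin q → RatFunc F) :=
  LinearMap.ker (Matrix.mulVecLin (ratMat M))

/-- The `k`-th Sylvester matrix of a polynomial matrix regarded as having degree at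
most `e`: the block-Toeplitz matrix with `k` block columns whose `j`-th block column
carries the coefficients `M_0, …, M_e` in block rows `j, …, j+e` and zeros elsewhere. -/
def sylv {p q : ℕ} (e k : ℕ) (M : Matrix (Fin p) (Fin q) F[X]) :
    Matrix (Fin (k + e) × Fin p) (Fin k × Fin q) F :=
  fun r c =>
    if (c.1 : ℕ) ≤ (r.1 : ℕ) ∧ (r.1 : ℕ) ≤ (c.1 : ℕ) + e then
      (M r.2 c.2).coeff ((r.1 : ℕ) - (c.1 : ℕ))
    else 0

/-- `M`, regarded as a polynomial matrix of degree at most `e`, has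
full-Sylvester-rank if every Sylvester matrix `S_k`, `k ≥ 1`, has full rank. -/
def HasFullSylvesterRank {p q : ℕ} (e : ℕ) (M : Matrix (Fin p) (Fin q) F[X]) : Prop :=
  ∀ k : ℕ, 1 ≤ k → (sylv e k M).rank = min ((k + e) * p) (k * q)

/-- The `k`-th coefficient matrix of a polynomial matrix. -/
def coeffMat {p q : ℕ} (k : ℕ) (M : Matrix (Fin p) (Fin q) F[X]) :
    Matrix (Fin p) (Fin q) F :=
  fun i j => (M i j).coeff k

/-- The highest-row-degree coefficient matrix: its `i`-th row is the coefficient of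
`λ^{d_i}` in the `i`-th row of `M`, where `d_i` is the `i`-th row degree. -/
def highRowMat {p q : ℕ} (M : Matrix (Fin p) (Fin q) F[X]) :
    Matrix (Fin p) (Fin q) F :=
  fun i j => (M i j).coeff (rowDeg M i)

/-- The `e`-reversal of a polynomial matrix: `rev_e P(λ) = λ^e P(1/λ)`. -/
def revMat {p q : ℕ} (e : ℕ) (P : Matrix (Fin p) (Fin q) F[X]) :
    Matrix (Fin p) (Fin q) F[X] :=
  fun i j => (P i j).reflect e


/-!
Let `ε₁, …, ε_ν` be the row degrees of a minimal basis `N` of the rational right null space of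
`M`. Minimal bases have the predictable degree property, so the polynomial null vectors of `M` of
degree `< k` have the `F`-basis `{λᵃ Nᵢ : a + εᵢ < k}`, of dimension `∑ᵢ (k - εᵢ)₊`. These null
vectors are exactly the kernel of `S_k`, read through their coefficients, hence
`rank S_k = k (m + n) - ∑ᵢ (k - εᵢ)₊`, and full-Sylvester-rank says `∑ᵢ (k - εᵢ)₊ = (k n - m d)₊`
for every `k`. For large `k` this forces `ν = n`, i.e. full row normal rank, and the values at
`k = k' - 1, k', k' + 1` force `t` indices equal to `k' - 1` and the others equal to `k'`.
-/

variable {n q : ℕ}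

def ratVec : (Fin q → F[X]) →ₗ[F[X]] Fin q → RatFunc F :=
  LinearMap.compLeft (Algebra.linearMap F[X] (RatFunc F)) (Fin q)

lemma ratVec_injective : Function.Injective (ratVec : (Fin q → F[X]) → Fin q → RatFunc F) :=
  (IsFractionRing.injective F[X] (RatFunc F)).comp_left

lemma ratRow_eq_ratVec {p : ℕ} (M : Matrix (Fin p) (Fin q) F[X]) (i : Fin p) :
    ratRow M i = ratVec (M i) := rfl

lemma ratVec_smul (s : F[X]) (x : Fin q → F[X]) :
    ratVec (s • x) = algebraMap F[X] (RatFunc F) s • ratVec x := by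
  rw [map_smul, algebraMap_smul]

lemma ratVec_sum_smul_rows (p : Fin n → F[X]) (N : Matrix (Fin n) (Fin q) F[X]) :
    ratVec (∑ i, p i • N i) = ∑ i, algebraMap F[X] (RatFunc F) (p i) • ratRow N i := by
  simp only [map_sum, ratVec_smul, ratRow_eq_ratVec]

lemma ratVec_mem_rightNullSpace_iff {m : ℕ} (M : Matrix (Fin m) (Fin q) F[X])
    (x : Fin q → F[X]) : ratVec x ∈ rightNullSpace M ↔ M *ᵥ x = 0 := by
  have : ratMat M *ᵥ ratVec x = ratVec (M *ᵥ x) := by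
    ext i; exact ((algebraMap F[X] (RatFunc F)).map_mulVec M x i).symm
  rw [rightNullSpace, LinearMap.mem_ker, Matrix.mulVecLin_apply, this, ← map_zero ratVec,
    ratVec_injective.eq_iff]

lemma ratRow_mem_rowSpan {p : ℕ} (M : Matrix (Fin p) (Fin q) F[X]) (i : Fin p) :
    ratRow M i ∈ rowSpan M :=
  Submodule.subset_span (Set.mem_range_self i)

def vdeg (x : Fin q → F[X]) : ℕ :=
  Finset.univ.sup fun j => (x j).natDegree

lemma rowDeg_eq_vdeg {p : ℕ} (M : Matrix (Fin p) (Fin q) F[X]) (i : Fin p) :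
    rowDeg M i = vdeg (M i) := rfl

lemma vdeg_le_iff {x : Fin q → F[X]} {δ : ℕ} :
    vdeg x ≤ δ ↔ ∀ j, (x j).natDegree ≤ δ := by
  simp [vdeg]

lemma natDegree_le_rowDeg {p : ℕ} (M : Matrix (Fin p) (Fin q) F[X]) (i : Fin p) (j : Fin q) :
    (M i j).natDegree ≤ rowDeg M i :=
  vdeg_le_iff.1 le_rfl j

lemma exists_algebraMap_eq_mul {ι : Type*} [Finite ι] (c : ι → RatFunc F) :
    ∃ s : F[X], s ≠ 0 ∧ ∃ p : ι → F[X],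
      ∀ i, algebraMap F[X] (RatFunc F) (p i) = algebraMap F[X] (RatFunc F) s * c i := by
  obtain ⟨s, hs⟩ := IsLocalization.exist_integer_multiples_of_finite (nonZeroDivisors F[X]) c
  choose p hp using hs
  exact ⟨s, nonZeroDivisors.coe_ne_zero s, p, fun i => by rw [hp i, Algebra.smul_def]⟩

lemma exists_ratVec_eq_smul (v : Fin q → RatFunc F) :
    ∃ s : F[X], s ≠ 0 ∧ ∃ x, ratVec x = algebraMap F[X] (RatFunc F) s • v := by
  obtain ⟨s, hs, x, hx⟩ := exists_algebraMap_eq_mul v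
  exact ⟨s, hs, x, funext hx⟩

lemma finrank_rowSpan {N : Matrix (Fin n) (Fin q) F[X]}
    (hN : LinearIndependent (RatFunc F) (ratRow N)) :
    Module.finrank (RatFunc F) (rowSpan N) = n := by
  rw [rowSpan, finrank_span_eq_card hN, Fintype.card_fin]

lemma rowSpan_eq_of_linearIndependent {V : Submodule (RatFunc F) (Fin q → RatFunc F)}
    {N : Matrix (Fin n) (Fin q) F[X]} (hN : LinearIndependent (RatFunc F) (ratRow N))
    (hV : Module.finrank (RatFunc F) V = n) (hNV : ∀ i, ratRow N i ∈ V) : rowSpan N = V :=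
  Submodule.eq_of_le_of_finrank_eq (Submodule.span_le.2 (Set.range_subset_iff.2 hNV))
    (by rw [finrank_rowSpan hN, hV])

lemma exists_polynomial_basis {V : Submodule (RatFunc F) (Fin q → RatFunc F)}
    (hV : Module.finrank (RatFunc F) V = n) :
    ∃ N : Matrix (Fin n) (Fin q) F[X],
      LinearIndependent (RatFunc F) (ratRow N) ∧ rowSpan N = V := by
  let b := Module.finBasisOfFinrankEq (RatFunc F) V hV
  choose s hs N hN using fun l => exists_ratVec_eq_smul (b l : Fin q → RatFunc F)
  let u : Fin n → (RatFunc F)ˣ := fun l =>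
    Units.mk0 _ ((map_ne_zero_iff _ (IsFractionRing.injective F[X] (RatFunc F))).2 (hs l))
  have hrow : ratRow N = u • fun l => (b l : Fin q → RatFunc F) := funext hN
  have hind : LinearIndependent (RatFunc F) (ratRow N) := by
    rw [hrow]
    exact (b.linearIndependent.map' V.subtype V.ker_subtype).units_smul u
  refine ⟨N, hind, rowSpan_eq_of_linearIndependent hind hV fun l => ?_⟩
  change ratVec (N l) ∈ V
  rw [hN]
  exact V.smul_mem _ (b l).2

lemma exists_isMinimalBasisOf {V : Submodule (RatFunc F) (Fin q → RatFunc F)}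
    (hV : Module.finrank (RatFunc F) V = n) :
    ∃ N : Matrix (Fin n) (Fin q) F[X], IsMinimalBasisOf V N := by
  classical
  have hex : ∃ D, ∃ N : Matrix (Fin n) (Fin q) F[X],
      LinearIndependent (RatFunc F) (ratRow N) ∧ rowSpan N = V ∧ ∑ i, rowDeg N i = D := by
    obtain ⟨N, hN, hNV⟩ := exists_polynomial_basis hV
    exact ⟨_, N, hN, hNV, rfl⟩
  obtain ⟨N, hN, hNV, hND⟩ := Nat.find_spec hex
  exact ⟨N, hN, hNV, fun N' hN' hN'V => hND ▸ Nat.find_min' hex ⟨N', hN', hN'V, rfl⟩⟩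

lemma IsMinimalBasisOf.finrank_eq {V : Submodule (RatFunc F) (Fin q → RatFunc F)}
    {N : Matrix (Fin n) (Fin q) F[X]} (hN : IsMinimalBasisOf V N) :
    Module.finrank (RatFunc F) V = n :=
  hN.2.1 ▸ finrank_rowSpan hN.1

lemma IsMinimalBasisOf.ratRow_mem {V : Submodule (RatFunc F) (Fin q → RatFunc F)}
    {N : Matrix (Fin n) (Fin q) F[X]} (hN : IsMinimalBasisOf V N) (i : Fin n) :
    ratRow N i ∈ V :=
  hN.2.1 ▸ ratRow_mem_rowSpan N i

/-- Exchanging the `j`-th row for `x` keeps a basis of `V`, so minimality bounds its degree. -/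
lemma IsMinimalBasisOf.rowDeg_le_vdeg {V : Submodule (RatFunc F) (Fin q → RatFunc F)}
    {N : Matrix (Fin n) (Fin q) F[X]} (hN : IsMinimalBasisOf V N) {x : Fin q → F[X]}
    {c : Fin n → RatFunc F} (hx : ratVec x = ∑ i, c i • ratRow N i) {j : Fin n}
    (hj : c j ≠ 0) : rowDeg N j ≤ vdeg x := by
  classical
  have hrow : ratRow (N.updateRow j x) = Function.update (ratRow N) j (ratVec x) := by
    ext i : 1
    rcases eq_or_ne i j with rfl | h <;> simp [ratRow_eq_ratVec, *]
  have hind : LinearIndependent (RatFunc F) (ratRow (N.updateRow j x)) := by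
    rw [hrow]
    refine hN.1.update j _ ⟨1, one_mem _,
      (Finsupp.linearEquivFunOnFinite (RatFunc F) (RatFunc F) (Fin n)).symm c,
      mem_nonZeroDivisors_of_ne_zero hj, ?_⟩
    rw [one_smul, Finsupp.linearCombination_eq_fintype_linearCombination_apply,
      Fintype.linearCombination_apply, hx]
  have hspan := rowSpan_eq_of_linearIndependent hind hN.finrank_eq fun i => by
    rw [hrow]
    rcases eq_or_ne i j with rfl | h
    · rw [Function.update_self, hx]
      exact V.sum_mem fun i _ => V.smul_mem _ (hN.ratRow_mem i)
    · rw [Function.update_of_ne h]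
      exact hN.ratRow_mem i
  have hdeg : rowDeg (N.updateRow j x) = Function.update (rowDeg N) j (vdeg x) := by
    ext i
    rcases eq_or_ne i j with rfl | h <;> simp [rowDeg_eq_vdeg, *]
  have hle := hN.2.2 _ hind hspan
  rw [hdeg, Finset.sum_update_of_mem (Finset.mem_univ j),
    ← Finset.add_sum_erase _ _ (Finset.mem_univ j), Finset.sdiff_singleton_eq_erase] at hle
  omega

lemma natDegree_sum_smul_rows_le {N : Matrix (Fin n) (Fin q) F[X]} {p : Fin n → F[X]} {D : ℕ}
    (hp : ∀ i, p i ≠ 0 → (p i).natDegree + rowDeg N i ≤ D) (j : Fin q) :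
    ((∑ i, p i • N i) j).natDegree ≤ D := by
  rw [Finset.sum_apply]
  refine natDegree_sum_le_of_forall_le _ _ fun i _ => ?_
  rcases eq_or_ne (p i) 0 with h | h
  · simp [h]
  · exact natDegree_mul_le.trans
      ((Nat.add_le_add_left (natDegree_le_rowDeg N i j) _).trans (hp i h))

lemma coeff_sum_smul_rows {N : Matrix (Fin n) (Fin q) F[X]} {p : Fin n → F[X]} {D : ℕ}
    (hp : ∀ i, p i ≠ 0 → (p i).natDegree + rowDeg N i ≤ D) (j : Fin q) :
    ((∑ i, p i • N i) j).coeff D = ∑ i, (p i).coeff (D - rowDeg N i) * highRowMat N i j := by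
  rw [Finset.sum_apply, finsetSum_coeff]
  refine Finset.sum_congr rfl fun i _ => ?_
  rcases eq_or_ne (p i) 0 with h | h
  · simp [h]
  · have hi := hp i h
    rw [Pi.smul_apply, smul_eq_mul, highRowMat, ← coeff_mul_add_eq_of_natDegree_le
      (by omega : (p i).natDegree ≤ D - rowDeg N i) (natDegree_le_rowDeg N i j),
      Nat.sub_add_cancel (by omega)]

lemma natDegree_lt_of_coeff_eq_zero {f : F[X]} {E : ℕ} (hf : f ≠ 0) (hE : f.natDegree ≤ E)
    (h : f.coeff E = 0) : f.natDegree < E :=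
  hE.lt_of_ne fun he => hf (leadingCoeff_eq_zero.1 (by rwa [leadingCoeff, he]))

lemma IsMinimalBasisOf.linearIndependent_highRowMat
    {V : Submodule (RatFunc F) (Fin q → RatFunc F)} {N : Matrix (Fin n) (Fin q) F[X]}
    (hN : IsMinimalBasisOf V N) : LinearIndependent F fun i => highRowMat N i := by
  classical
  -- A dependency `g` among the leading row coefficients gives a combination `w` of shifted rows
  -- of degree below the largest row degree `E` involved; exchanging that row for `w` contradicts
  -- minimality.
  rw [Fintype.linearIndependent_iff]
  by_contra! h
  obtain ⟨g, hg, i₀, hi₀⟩ := h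
  obtain ⟨j, hj, hjmax⟩ :=
    Finset.exists_max_image {i | g i ≠ 0} (rowDeg N) ⟨i₀, by simpa⟩
  simp only [Finset.mem_filter, Finset.mem_univ, true_and] at hj hjmax
  set E := rowDeg N j
  set p : Fin n → F[X] := fun i => C (g i) * X ^ (E - rowDeg N i)
  have hp : ∀ i, p i ≠ 0 → (p i).natDegree + rowDeg N i ≤ E := fun i hi => by
    have := hjmax i (left_ne_zero_of_mul hi ∘ C_eq_zero.2)
    have : (p i).natDegree ≤ E - rowDeg N i := natDegree_C_mul_X_pow_le _ _
    omega
  have hpj : algebraMap F[X] (RatFunc F) (p j) ≠ 0 :=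
    (map_ne_zero_iff _ (IsFractionRing.injective F[X] (RatFunc F))).2
      (mul_ne_zero (C_ne_zero.2 hj) (pow_ne_zero _ X_ne_zero))
  have hwv := ratVec_sum_smul_rows p N
  have hdeg := natDegree_sum_smul_rows_le hp
  have htop : ∀ col, ((∑ i, p i • N i) col).coeff E = 0 := fun col => by
    rw [coeff_sum_smul_rows hp]
    simpa [p, coeff_C_mul_X_pow, Finset.sum_apply] using congrFun hg col
  generalize ∑ i, p i • N i = w at hwv hdeg htop
  have hw0 : w ≠ 0 := fun h => hpj <| Fintype.linearIndependent_iff.1 hN.1 _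
    (by rw [← hwv, h, map_zero]) j
  obtain ⟨col, hcol⟩ : ∃ col, w col ≠ 0 := by
    by_contra! h
    exact hw0 (funext h)
  have hE := natDegree_lt_of_coeff_eq_zero hcol (hdeg col) (htop col)
  have hw : vdeg w ≤ E - 1 := vdeg_le_iff.2 fun c => by
    rcases eq_or_ne (w c) 0 with h | h
    · simp [h]
    · have := natDegree_lt_of_coeff_eq_zero h (hdeg c) (htop c)
      omega
  have := hN.rowDeg_le_vdeg hwv hpj
  omega

/-- The predictable degree property of a row-reduced polynomial matrix. -/
lemma natDegree_add_rowDeg_le {N : Matrix (Fin n) (Fin q) F[X]}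
    (hN : LinearIndependent F fun i => highRowMat N i) {s : F[X]} {x : Fin q → F[X]}
    {p : Fin n → F[X]} (hx : s • x = ∑ i, p i • N i) {δ : ℕ} (hδ : vdeg x ≤ δ)
    {i : Fin n} (hi : p i ≠ 0) : (p i).natDegree + rowDeg N i ≤ s.natDegree + δ := by
  classical
  by_contra! hlt
  obtain ⟨i₁, hi₁, hmax⟩ := Finset.exists_max_image {i | p i ≠ 0}
    (fun i => (p i).natDegree + rowDeg N i) ⟨i, by simpa⟩
  simp only [Finset.mem_filter, Finset.mem_univ, true_and] at hi₁ hmax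
  set D := (p i₁).natDegree + rowDeg N i₁
  have hcoeff : ∑ i, (p i).coeff (D - rowDeg N i) • highRowMat N i = 0 := funext fun j => by
    have hxj : ((s • x) j).coeff D = 0 := coeff_eq_zero_of_natDegree_lt <|
      natDegree_mul_le.trans_lt (by have := vdeg_le_iff.1 hδ j; have := hmax i hi; omega)
    rw [hx, coeff_sum_smul_rows hmax] at hxj
    simpa [Finset.sum_apply] using hxj
  have := Fintype.linearIndependent_iff.1 hN _ hcoeff i₁
  rw [show D - rowDeg N i₁ = (p i₁).natDegree by omega] at this
  exact hi₁ (leadingCoeff_eq_zero.1 this)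

lemma IsMinimalBasisOf.exists_coeff_eq_sum_highRowMat
    {V : Submodule (RatFunc F) (Fin q → RatFunc F)} {N : Matrix (Fin n) (Fin q) F[X]}
    (hN : IsMinimalBasisOf V N) {x : Fin q → F[X]} (hxV : ratVec x ∈ V) {δ : ℕ}
    (hδ : vdeg x ≤ δ) :
    ∃ a : Fin n → F, (∀ i, δ < rowDeg N i → a i = 0) ∧
      ∀ j, (x j).coeff δ = ∑ i, a i * highRowMat N i j := by
  rw [← hN.2.1, rowSpan, Submodule.mem_span_range_iff_exists_fun] at hxV
  obtain ⟨c, hc⟩ := hxV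
  obtain ⟨s, hs, p, hp⟩ := exists_algebraMap_eq_mul c
  have hinj := IsFractionRing.injective F[X] (RatFunc F)
  have hsx : s • x = ∑ i, p i • N i := ratVec_injective <| by
    rw [ratVec_smul, ratVec_sum_smul_rows, ← hc, Finset.smul_sum]
    simp only [hp, mul_smul]
  have hp0 : ∀ i, δ < rowDeg N i → p i = 0 := fun i hi => by
    by_contra hpi
    have hci : c i ≠ 0 := fun h => hpi (hinj (by rw [hp, h, mul_zero, map_zero]))
    have := hN.rowDeg_le_vdeg hc.symm hci
    omega
  have hdeg := fun i => natDegree_add_rowDeg_le hN.linearIndependent_highRowMat hsx hδ (i := i)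
  refine ⟨fun i => (p i).coeff (s.natDegree + δ - rowDeg N i) / s.leadingCoeff,
    fun i hi => by simp [hp0 i hi], fun j => ?_⟩
  have hxj := congrArg (coeff · (s.natDegree + δ)) (congrFun hsx j)
  simp only [Pi.smul_apply, smul_eq_mul] at hxj
  rw [coeff_mul_add_eq_of_natDegree_le le_rfl (vdeg_le_iff.1 hδ j),
    coeff_sum_smul_rows hdeg] at hxj
  simp_rw [div_mul_eq_mul_div, ← Finset.sum_div, ← hxj]
  rw [eq_div_iff (leadingCoeff_ne_zero.2 hs), mul_comm, leadingCoeff]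

def shiftFamily (N : Matrix (Fin n) (Fin q) F[X]) (K : Fin n → ℕ) :
    (Σ i, Fin (K i)) → Fin q → F[X] :=
  fun ia => (X : F[X]) ^ (ia.2 : ℕ) • N ia.1

def shiftSpan (N : Matrix (Fin n) (Fin q) F[X]) (k : ℕ) : Submodule F (Fin q → F[X]) :=
  Submodule.span F (Set.range (shiftFamily N fun i => k - rowDeg N i))

lemma X_pow_smul_mem_shiftSpan {N : Matrix (Fin n) (Fin q) F[X]} {a k : ℕ} {i : Fin n}
    (h : a + rowDeg N i < k) : (X : F[X]) ^ a • N i ∈ shiftSpan N k :=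
  Submodule.subset_span ⟨⟨i, a, by omega⟩, rfl⟩

lemma shiftSpan_mono (N : Matrix (Fin n) (Fin q) F[X]) {k l : ℕ} (h : k ≤ l) :
    shiftSpan N k ≤ shiftSpan N l :=
  Submodule.span_le.2 <| Set.range_subset_iff.2 fun ⟨i, a⟩ =>
    X_pow_smul_mem_shiftSpan (a := a) (i := i) <| by
      have : (a : ℕ) < k - rowDeg N i := a.isLt
      omega

lemma linearIndependent_shiftFamily {N : Matrix (Fin n) (Fin q) F[X]}
    (hN : LinearIndependent (RatFunc F) (ratRow N)) (K : Fin n → ℕ) :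
    LinearIndependent F (shiftFamily N K) := by
  classical
  rw [Fintype.linearIndependent_iff]
  intro g hg
  have hgroup :
      ∑ ia, g ia • shiftFamily N K ia = ∑ i, ofFn (K i) (fun a => g ⟨i, a⟩) • N i := by
    rw [← Finset.univ_sigma_univ, Finset.sum_sigma]
    refine Finset.sum_congr rfl fun i _ => ?_
    simp only [ofFn_eq_sum_monomial, Finset.sum_smul, shiftFamily, ← smul_X_eq_monomial,
      smul_assoc]
  have hP := Fintype.linearIndependent_iff.1 hN _
    (by rw [← ratVec_sum_smul_rows, ← hgroup, hg, map_zero])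
  rintro ⟨i, a⟩
  have h0 : ofFn (K i) (fun a => g ⟨i, a⟩) = ofFn (K i) 0 := by
    rw [map_zero]
    exact (map_eq_zero_iff _ (IsFractionRing.injective F[X] (RatFunc F))).1 (hP i)
  exact congrFun (injective_ofFn _ h0) a

lemma finrank_shiftSpan {N : Matrix (Fin n) (Fin q) F[X]}
    (hN : LinearIndependent (RatFunc F) (ratRow N)) (k : ℕ) :
    Module.finrank F (shiftSpan N k) = ∑ i, (k - rowDeg N i) := by
  rw [shiftSpan, finrank_span_eq_card (linearIndependent_shiftFamily hN _), Fintype.card_sigma]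
  simp

lemma vdeg_le_of_mem_degreeLT {x : Fin q → F[X]} {δ : ℕ}
    (hx : ∀ j, x j ∈ degreeLT F (δ + 1)) : vdeg x ≤ δ :=
  vdeg_le_iff.2 fun j => natDegree_le_of_degree_le <| mem_degreeLE.1 <|
    (degreeLT_succ_eq_degreeLE (R := F)) ▸ hx j

lemma IsMinimalBasisOf.exists_mem_shiftSpan_sub_mem_degreeLT
    {V : Submodule (RatFunc F) (Fin q → RatFunc F)} {N : Matrix (Fin n) (Fin q) F[X]}
    (hN : IsMinimalBasisOf V N) {x : Fin q → F[X]} (hxV : ratVec x ∈ V) {δ : ℕ}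
    (hδ : vdeg x ≤ δ) :
    ∃ y ∈ shiftSpan N (δ + 1), ratVec y ∈ V ∧ ∀ j, (x - y) j ∈ degreeLT F δ := by
  obtain ⟨a, ha, hax⟩ := hN.exists_coeff_eq_sum_highRowMat hxV hδ
  set p : Fin n → F[X] := fun i => C (a i) * X ^ (δ - rowDeg N i)
  have hp : ∀ i, p i ≠ 0 → (p i).natDegree + rowDeg N i ≤ δ := fun i hi => by
    have : (p i).natDegree ≤ δ - rowDeg N i := natDegree_C_mul_X_pow_le _ _
    have : rowDeg N i ≤ δ := by
      by_contra h
      exact hi (by simp [p, ha i (by omega)])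
    omega
  refine ⟨∑ i, p i • N i, sum_mem fun i _ => ?_, ?_, fun j => ?_⟩
  · by_cases hi : rowDeg N i ≤ δ
    · rw [show p i • N i = a i • (X : F[X]) ^ (δ - rowDeg N i) • N i by
        rw [← smul_assoc, smul_eq_C_mul]]
      exact Submodule.smul_mem _ _ (X_pow_smul_mem_shiftSpan (by omega))
    · simp [p, ha i (by omega)]
  · rw [ratVec_sum_smul_rows]
    exact sum_mem fun i _ => V.smul_mem _ (hN.ratRow_mem i)
  · rw [mem_degreeLT, degree_lt_iff_coeff_zero]
    intro r hr
    rw [Pi.sub_apply, coeff_sub]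
    rcases hr.eq_or_lt with rfl | hr
    · rw [coeff_sum_smul_rows hp, hax]
      simp [p]
    · rw [coeff_eq_zero_of_natDegree_lt ((vdeg_le_iff.1 hδ j).trans_lt hr),
        coeff_eq_zero_of_natDegree_lt ((natDegree_sum_smul_rows_le hp j).trans_lt hr), sub_zero]

lemma IsMinimalBasisOf.mem_shiftSpan {V : Submodule (RatFunc F) (Fin q → RatFunc F)}
    {N : Matrix (Fin n) (Fin q) F[X]} (hN : IsMinimalBasisOf V N) {k : ℕ} {x : Fin q → F[X]}
    (hxV : ratVec x ∈ V) (hx : ∀ j, x j ∈ degreeLT F k) : x ∈ shiftSpan N k := by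
  induction k generalizing x with
  | zero =>
    obtain rfl : x = 0 := funext fun j => by simpa [mem_degreeLT] using hx j
    exact zero_mem _
  | succ δ ih =>
    obtain ⟨y, hy, hyV, hxy⟩ :=
      hN.exists_mem_shiftSpan_sub_mem_degreeLT hxV (vdeg_le_of_mem_degreeLT hx)
    have hxyV : ratVec (x - y) ∈ V := by rw [map_sub]; exact sub_mem hxV hyV
    rw [← sub_add_cancel x y]
    exact add_mem (shiftSpan_mono N δ.le_succ (ih hxyV hxy)) hy

def polyKer {m : ℕ} (M : Matrix (Fin m) (Fin q) F[X]) (k : ℕ) : Submodule F (Fin q → F[X]) :=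
  Submodule.pi Set.univ (fun _ => degreeLT F k) ⊓ (LinearMap.ker M.mulVecLin).restrictScalars F

lemma mem_polyKer {m : ℕ} {M : Matrix (Fin m) (Fin q) F[X]} {k : ℕ} {x : Fin q → F[X]} :
    x ∈ polyKer M k ↔ (∀ j, x j ∈ degreeLT F k) ∧ M *ᵥ x = 0 := by
  simp [polyKer]

lemma IsMinimalBasisOf.polyKer_eq_shiftSpan {m : ℕ} {M : Matrix (Fin m) (Fin q) F[X]}
    {N : Matrix (Fin n) (Fin q) F[X]} (hN : IsMinimalBasisOf (rightNullSpace M) N) (k : ℕ) :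
    polyKer M k = shiftSpan N k := by
  refine le_antisymm (fun x hx => ?_) (Submodule.span_le.2 ?_)
  · rw [mem_polyKer] at hx
    exact hN.mem_shiftSpan ((ratVec_mem_rightNullSpace_iff M x).2 hx.2) hx.1
  · rintro _ ⟨⟨i, a⟩, rfl⟩
    refine mem_polyKer.2 ⟨fun j => mem_degreeLT.2 ?_, ?_⟩
    · have ha : (a : ℕ) < k - rowDeg N i := a.isLt
      have : ((X : F[X]) ^ (a : ℕ) * N i j).natDegree < k := natDegree_mul_le.trans_lt <| by
        have := natDegree_le_rowDeg N i j
        have := natDegree_X_pow_le (R := F) (a : ℕ)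
        omega
      exact degree_le_natDegree.trans_lt (WithBot.coe_lt_coe.2 this)
    · rw [shiftFamily, Matrix.mulVec_smul,
        (ratVec_mem_rightNullSpace_iff M _).1 (hN.ratRow_mem i), smul_zero]

lemma IsMinimalBasisOf.finrank_polyKer {m : ℕ} {M : Matrix (Fin m) (Fin q) F[X]}
    {N : Matrix (Fin n) (Fin q) F[X]} (hN : IsMinimalBasisOf (rightNullSpace M) N) (k : ℕ) :
    Module.finrank F (polyKer M k) = ∑ i, (k - rowDeg N i) := by
  rw [hN.polyKer_eq_shiftSpan, finrank_shiftSpan hN.1]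

open scoped Classical in
def coeffsToPolyVec (k : ℕ) : (Fin k × Fin q → F) →ₗ[F] Fin q → F[X] :=
  LinearMap.pi fun j => ofFn k ∘ₗ LinearMap.funLeft F F fun a => (a, j)

lemma coeff_coeffsToPolyVec {k : ℕ} (c : Fin k × Fin q → F) (j : Fin q) (r : ℕ) :
    (coeffsToPolyVec k c j).coeff r = if h : r < k then c (⟨r, h⟩, j) else 0 := by
  classical
  split_ifs with h
  · exact ofFn_coeff_eq_val_of_lt _ h
  · exact ofFn_coeff_eq_zero_of_ge _ (not_lt.1 h)

lemma coeffsToPolyVec_mem_degreeLT {k : ℕ} (c : Fin k × Fin q → F) (j : Fin q) :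
    coeffsToPolyVec k c j ∈ degreeLT F k := by
  classical
  exact mem_degreeLT.2 (ofFn_degree_lt _)

lemma coeffsToPolyVec_injective (k : ℕ) :
    Function.Injective (coeffsToPolyVec (F := F) (q := q) k) := fun c c' h => by
  ext ⟨a, j⟩
  simpa [coeff_coeffsToPolyVec] using congrArg (coeff · a) (congrFun h j)

lemma exists_coeffsToPolyVec_eq {k : ℕ} {x : Fin q → F[X]} (hx : ∀ j, x j ∈ degreeLT F k) :
    ∃ c, coeffsToPolyVec k c = x := by
  refine ⟨fun aj => (x aj.2).coeff aj.1, funext fun j => Polynomial.ext fun r => ?_⟩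
  rw [coeff_coeffsToPolyVec]
  split_ifs with h
  · rfl
  · exact (coeff_eq_zero_of_degree_lt ((mem_degreeLT.1 (hx j)).trans_le
      (WithBot.coe_le_coe.2 (not_lt.1 h)))).symm

variable {m : ℕ}

lemma sylv_mulVec_apply {d k : ℕ} {M : Matrix (Fin m) (Fin q) F[X]}
    (hdeg : ∀ i j, (M i j).natDegree ≤ d) (c : Fin k × Fin q → F) (r : Fin (k + d))
    (i : Fin m) : (sylv d k M *ᵥ c) (r, i) = ((M *ᵥ coeffsToPolyVec k c) i).coeff r := by
  classical
  simp only [Matrix.mulVec, dotProduct, Fintype.sum_prod_type, finsetSum_coeff]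
  rw [Finset.sum_comm]
  refine Finset.sum_congr rfl fun j _ => ?_
  simp only [coeffsToPolyVec, LinearMap.pi_apply, LinearMap.coe_comp, Function.comp_apply,
    LinearMap.funLeft_apply, ofFn_eq_sum_monomial, Finset.mul_sum, finsetSum_coeff]
  refine Finset.sum_congr rfl fun a _ => ?_
  rw [← C_mul_X_pow_eq_monomial, ← mul_assoc, coeff_mul_X_pow', coeff_mul_C, sylv]
  by_cases h₁ : (a : ℕ) ≤ r
  · by_cases h₂ : (r : ℕ) ≤ a + d
    · simp [h₁, h₂]
    · simp [h₁, h₂, coeff_eq_zero_of_natDegree_lt ((hdeg i j).trans_lt (by omega : d < r - a))]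
  · simp [h₁]

lemma coeff_mulVec_eq_zero {d k : ℕ} {M : Matrix (Fin m) (Fin q) F[X]}
    (hdeg : ∀ i j, (M i j).natDegree ≤ d) {x : Fin q → F[X]}
    (hx : ∀ j, x j ∈ degreeLT F k) (i : Fin m) {r : ℕ} (hr : k + d ≤ r) :
    ((M *ᵥ x) i).coeff r = 0 := by
  simp only [Matrix.mulVec, dotProduct, finsetSum_coeff]
  refine Finset.sum_eq_zero fun j _ => ?_
  rcases eq_or_ne (x j) 0 with h | h
  · simp [h]
  · have := (natDegree_lt_iff_degree_lt h).2 (mem_degreeLT.1 (hx j))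
    exact coeff_eq_zero_of_natDegree_lt (natDegree_mul_le.trans_lt (by have := hdeg i j; omega))

lemma sylv_mulVec_eq_zero_iff {d k : ℕ} {M : Matrix (Fin m) (Fin q) F[X]}
    (hdeg : ∀ i j, (M i j).natDegree ≤ d) (c : Fin k × Fin q → F) :
    sylv d k M *ᵥ c = 0 ↔ M *ᵥ coeffsToPolyVec k c = 0 := by
  refine ⟨fun h => funext fun i => Polynomial.ext fun r => ?_,
    fun h => funext fun ⟨r, i⟩ => ?_⟩
  · by_cases hr : r < k + d
    · simpa [sylv_mulVec_apply hdeg] using congrFun h (⟨r, hr⟩, i)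
    · exact coeff_mulVec_eq_zero hdeg (coeffsToPolyVec_mem_degreeLT c) i (not_lt.1 hr)
  · simp [sylv_mulVec_apply hdeg, h]

lemma map_ker_sylv {d k : ℕ} {M : Matrix (Fin m) (Fin q) F[X]}
    (hdeg : ∀ i j, (M i j).natDegree ≤ d) :
    (LinearMap.ker (sylv d k M).mulVecLin).map (coeffsToPolyVec k) = polyKer M k := by
  ext x
  simp only [Submodule.mem_map, LinearMap.mem_ker, Matrix.mulVecLin_apply,
    sylv_mulVec_eq_zero_iff hdeg, mem_polyKer]
  constructor
  · rintro ⟨c, hc, rfl⟩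
    exact ⟨coeffsToPolyVec_mem_degreeLT c, hc⟩
  · rintro ⟨hx, hMx⟩
    obtain ⟨c, rfl⟩ := exists_coeffsToPolyVec_eq hx
    exact ⟨c, hMx, rfl⟩

lemma rank_sylv_add_finrank_polyKer {d k : ℕ} {M : Matrix (Fin m) (Fin q) F[X]}
    (hdeg : ∀ i j, (M i j).natDegree ≤ d) :
    (sylv d k M).rank + Module.finrank F (polyKer M k) = k * q := by
  rw [← map_ker_sylv hdeg, ← LinearEquiv.finrank_eq
    (Submodule.equivMapOfInjective _ (coeffsToPolyVec_injective k) _), Matrix.rank,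
    LinearMap.finrank_range_add_finrank_ker]
  simp

lemma rank_sylv_add_sum_tsub_rowDeg {d k : ℕ} {M : Matrix (Fin m) (Fin q) F[X]}
    (hdeg : ∀ i j, (M i j).natDegree ≤ d) {N : Matrix (Fin n) (Fin q) F[X]}
    (hN : IsMinimalBasisOf (rightNullSpace M) N) :
    (sylv d k M).rank + ∑ i, (k - rowDeg N i) = k * q := by
  rw [← hN.finrank_polyKer, rank_sylv_add_finrank_polyKer hdeg]

lemma rank_ratMat_add_finrank_rightNullSpace (M : Matrix (Fin m) (Fin q) F[X]) :
    (ratMat M).rank + Module.finrank (RatFunc F) (rightNullSpace M) = q := by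
  rw [Matrix.rank, rightNullSpace, LinearMap.finrank_range_add_finrank_ker]
  simp

lemma hasFullSylvesterRank_iff_sum_tsub_rowDeg {d ν : ℕ} {M : Matrix (Fin m) (Fin (m + n)) F[X]}
    (hdeg : ∀ i j, (M i j).natDegree ≤ d) {N : Matrix (Fin ν) (Fin (m + n)) F[X]}
    (hN : IsMinimalBasisOf (rightNullSpace M) N) :
    HasFullSylvesterRank d M ↔ ∀ k, ∑ i, (k - rowDeg N i) = k * n - m * d := by
  -- `k * n - m * d` is truncated: it is `k * (m + n) - min ((k + d) * m) (k * (m + n))`.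
  have key (k : ℕ) : (sylv d k M).rank + ∑ i, (k - rowDeg N i) = k * m + k * n := by
    rw [rank_sylv_add_sum_tsub_rowDeg hdeg hN, mul_add]
  have hmin (k : ℕ) :
      min ((k + d) * m) (k * (m + n)) = min (k * m + m * d) (k * m + k * n) := by
    rw [add_mul, mul_add, mul_comm d m]
  refine ⟨fun h k => ?_, fun h k _ => ?_⟩
  · rcases k.eq_zero_or_pos with rfl | hk
    · simp
    · have := hmin k ▸ h k hk
      have := key k
      omega
  · rw [hmin]
    have := h k
    have := key k
    omega

lemma eq_of_forall_sum_tsub_eq {ν n c : ℕ} {ε : Fin ν → ℕ}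
    (h : ∀ k, ∑ i, (k - ε i) = k * n - c) : ν = n := by
  set K := ∑ i, ε i + c
  have hK : ∀ i, ε i ≤ K := fun i =>
    (Finset.single_le_sum (fun i _ => Nat.zero_le (ε i)) (Finset.mem_univ i)).trans le_self_add
  have hcK : c ≤ K * n ∨ n = 0 := by
    rcases n.eq_zero_or_pos with hn | hn
    · exact .inr hn
    · exact .inl (le_add_self.trans (Nat.le_mul_of_pos_right K hn))
  have h₁ := h K
  have h₂ := h (K + 1)
  rw [Finset.sum_congr rfl fun i _ => (by have := hK i; omega : K + 1 - ε i = (K - ε i) + 1),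
    Finset.sum_add_distrib, add_mul] at h₂
  simp only [Finset.sum_const, Finset.card_univ, Fintype.card_fin, smul_eq_mul, mul_one] at h₂
  omega

lemma sum_tsub_eq_iff {n a t c : ℕ} {ε : Fin n → ℕ} (ht : t < n) (hc : c + t = (a + 1) * n) :
    (∀ k, ∑ i, (k - ε i) = k * n - c) ↔
      (∀ i, ε i = a ∨ ε i = a + 1) ∧ (Finset.univ.filter fun i => ε i = a).card = t := by
  have hcard : (Finset.univ.filter fun i => ε i = a).card = ∑ i, if ε i = a then 1 else 0 :=
    Finset.card_filter _ _
  constructor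
  · intro h
    have hge : ∀ i, a ≤ ε i := fun i => by
      have := Finset.sum_eq_zero_iff.1 ((h a).trans (by rw [add_mul] at hc; omega)) i
        (Finset.mem_univ i)
      omega
    have h₁ : ∑ i, (a + 1 - ε i) = ∑ i, if ε i = a then 1 else 0 :=
      Finset.sum_congr rfl fun i _ => by have := hge i; split_ifs <;> omega
    have h₂ : ∑ i, (a + 2 - ε i) = ∑ i, ((a + 1 - ε i) + 1) := by
      rw [h, Finset.sum_add_distrib, h]
      simp only [Finset.sum_const, Finset.card_univ, Fintype.card_fin, smul_eq_mul, mul_one]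
      rw [show (a + 2) * n = (a + 1) * n + n by ring]
      omega
    rw [Finset.sum_eq_sum_iff_of_le fun i _ => by omega] at h₂
    refine ⟨fun i => ?_, by rw [hcard, ← h₁, h]; omega⟩
    have := h₂ i (Finset.mem_univ i)
    have := hge i
    omega
  · rintro ⟨hval, hcount⟩ k
    rcases le_or_gt k a with hk | hk
    · rw [Finset.sum_eq_zero fun i _ => by have := hval i; omega]
      have : k * n ≤ a * n := Nat.mul_le_mul_right n hk
      rw [add_mul] at hc
      omega
    · obtain ⟨j, rfl⟩ := Nat.exists_eq_add_of_lt hk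
      have hterm (i : Fin n) : a + j + 1 - ε i = j + if ε i = a then 1 else 0 := by
        rcases hval i with h | h <;> simp [h]; omega
      rw [Finset.sum_congr rfl fun i _ => hterm i, Finset.sum_add_distrib, ← hcard, hcount]
      simp only [Finset.sum_const, Finset.card_univ, Fintype.card_fin, smul_eq_mul]
      rw [show (a + j + 1) * n = (a + 1) * n + n * j by ring]
      omega

lemma card_filter_eq_iff_forall_eq_or_eq_succ {n a t : ℕ} {ε : Fin n → ℕ} (ht : t ≤ n) :
    ((Finset.univ.filter fun i => ε i = a).card = t ∧
      (Finset.univ.filter fun i => ε i = a + 1).card = n - t ∧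
      ∀ j : ℕ, j ≠ a → j ≠ a + 1 → (Finset.univ.filter fun i => ε i = j).card = 0) ↔
      (∀ i, ε i = a ∨ ε i = a + 1) ∧ (Finset.univ.filter fun i => ε i = a).card = t := by
  constructor
  · rintro ⟨ha, -, hother⟩
    refine ⟨fun i => ?_, ha⟩
    by_contra! hi
    have := hother (ε i) hi.1 hi.2
    rw [Finset.card_eq_zero, Finset.filter_eq_empty_iff] at this
    exact this (Finset.mem_univ i) rfl
  · rintro ⟨hval, ha⟩
    refine ⟨ha, ?_, fun j hj₁ hj₂ => ?_⟩
    · have := Finset.card_filter_add_card_filter_not (s := Finset.univ) fun i => ε i = a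
      rw [Finset.filter_congr fun i _ => (by rcases hval i with h | h <;> simp [h] :
        ¬ ε i = a ↔ ε i = a + 1)] at this
      simp only [Finset.card_univ, Fintype.card_fin] at this
      omega
    · rw [Finset.card_eq_zero, Finset.filter_eq_empty_iff]
      intro i _
      rcases hval i with h | h <;> omega

lemma exists_ceil_div_eq_succ {c n : ℕ} (hc : 0 < c) (hn : 0 < n) :
    ∃ a, ⌈(c : ℚ) / n⌉₊ = a + 1 ∧ c ≤ (a + 1) * n ∧ (a + 1) * n - c < n := by
  have hn' : (0 : ℚ) < n := by exact_mod_cast hn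
  have hpos : 0 < ⌈(c : ℚ) / n⌉₊ := Nat.ceil_pos.2 (div_pos (by exact_mod_cast hc) hn')
  obtain ⟨a, ha⟩ := Nat.exists_eq_add_one_of_ne_zero hpos.ne'
  have hlt := Nat.lt_ceil.1 (ha ▸ a.lt_add_one : a < ⌈(c : ℚ) / n⌉₊)
  have hle := ha ▸ Nat.le_ceil ((c : ℚ) / n)
  rw [lt_div_iff₀ hn'] at hlt
  rw [div_le_iff₀ hn'] at hle
  have : a * n < c := by exact_mod_cast hlt
  refine ⟨a, ha, by exact_mod_cast hle, ?_⟩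
  rw [add_one_mul]
  omega

/-- `M(λ)` has full-Sylvester-rank if and only if it has full row normal rank `m` and
its right minimal indices are `t` copies of `k' - 1` and `n - t` copies of `k'`,
where `k' = ⌈md/n⌉` and `t = nk' - md`. -/
theorem hasFullSylvesterRank_iff_rightMinimalIndices {F : Type*} [Field F]
    {m n d : ℕ} (hm : 0 < m) (hn : 0 < n) (hd : 0 < d)
    (M : Matrix (Fin m) (Fin (m + n)) F[X]) (hdeg : ∀ i j, (M i j).natDegree ≤ d)
    (k' t : ℕ) (hk' : k' = ⌈(m * d : ℚ) / (n : ℚ)⌉₊) (ht : t = n * k' - m * d) :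
    HasFullSylvesterRank d M ↔
      ((ratMat M).rank = m ∧
        ∀ N : Matrix (Fin n) (Fin (m + n)) F[X],
          IsMinimalBasisOf (rightNullSpace M) N →
          (Finset.univ.filter fun i => rowDeg N i = k' - 1).card = t ∧
          (Finset.univ.filter fun i => rowDeg N i = k').card = n - t ∧
          ∀ j : ℕ, j ≠ k' - 1 → j ≠ k' →
            (Finset.univ.filter fun i => rowDeg N i = j).card = 0) := by
  obtain ⟨a, ha, hle, hlt⟩ := exists_ceil_div_eq_succ (Nat.mul_pos hm hd) hn
  push_cast at ha
  obtain rfl : k' = a + 1 := hk'.trans ha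
  rw [mul_comm n] at ht
  subst ht
  simp only [Nat.add_sub_cancel]
  have hc : m * d + ((a + 1) * n - m * d) = (a + 1) * n := Nat.add_sub_cancel' hle
  have hrank := rank_ratMat_add_finrank_rightNullSpace M
  have hcounts {N : Matrix (Fin n) (Fin (m + n)) F[X]}
      (hN : IsMinimalBasisOf (rightNullSpace M) N) :=
    ((hasFullSylvesterRank_iff_sum_tsub_rowDeg hdeg hN).trans (sum_tsub_eq_iff hlt hc)).trans
      (card_filter_eq_iff_forall_eq_or_eq_succ hlt.le).symm
  constructor
  · intro hS
    obtain ⟨N₀, hN₀⟩ :=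
      exists_isMinimalBasisOf (rfl : Module.finrank _ (rightNullSpace M) = _)
    have := eq_of_forall_sum_tsub_eq ((hasFullSylvesterRank_iff_sum_tsub_rowDeg hdeg hN₀).1 hS)
    exact ⟨by omega, fun N hN => (hcounts hN).1 hS⟩
  · rintro ⟨hrk, hN⟩
    obtain ⟨N, hN'⟩ := exists_isMinimalBasisOf (n := n) (V := rightNullSpace M) (by omega)
    exact (hcounts hN').2 (hN N hN')

end
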